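/- A 4-dimensional real subspace W of ℝ⁷ satisfies φ₀(u,v,w) = 0 for all u, v, w ∈ W if and only if W is a coassociative 4-plane with some orientation, i.e., |*φ₀(e₁,e₂,e₃,e₄)| = 1 for every orthonormal basis (e₁,e₂,e₃,e₄) of W (equivalently, for some orthonormal basis of W). This is the linear-algebra content of the fact that a 4-submanifold L of a G₂-manifold is coassociative (for some orientation) if and only if φ restricts to zero on L. -/

import Mathlib

open scoped RealInnerProductSpace
noncomputable section
abbrev E7 := EuclideanSpace ℝ (Fin 7)
def tri7 (i j k : Fin 7) (u v w : E7) : ℝ :=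
  Matrix.det !![u i, u j, u k; v i, v j, v k; w i, w j, w k]
def phi0 (u v w : E7) : ℝ :=
  tri7 0 1 2 u v w + tri7 0 3 4 u v w + tri7 0 5 6 u v w + tri7 1 3 5 u v w
    - tri7 1 4 6 u v w - tri7 2 3 6 u v w - tri7 2 4 5 u v w
def quad7 (i j k l : Fin 7) (a b c d : E7) : ℝ :=
  Matrix.det !![a i, a j, a k, a l; b i, b j, b k, b l;
                c i, c j, c k, c l; d i, d j, d k, d l]
def starphi0 (a b c d : E7) : ℝ :=
  quad7 3 4 5 6 a b c d + quad7 1 2 5 6 a b c d + quad7 1 2 3 4 a b c d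
    + quad7 0 2 4 6 a b c d - quad7 0 2 3 5 a b c d - quad7 0 1 4 5 a b c d
    - quad7 0 1 3 6 a b c d
lemma tri7_expand (i j k : Fin 7) (u v w : E7) :
    tri7 i j k u v w =
      u i * (v j * w k - v k * w j) - u j * (v i * w k - v k * w i)
        + u k * (v i * w j - v j * w i) := by
  simp [tri7, Matrix.det_fin_three]; ring
lemma quad7_expand (i j k l : Fin 7) (a b c d : E7) :
    quad7 i j k l a b c d =
        a i * (b j * (c k * d l - c l * d k) - b k * (c j * d l - c l * d j)
              + b l * (c j * d k - c k * d j))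
      - a j * (b i * (c k * d l - c l * d k) - b k * (c i * d l - c l * d i)
              + b l * (c i * d k - c k * d i))
      + a k * (b i * (c j * d l - c l * d j) - b j * (c i * d l - c l * d i)
              + b l * (c i * d j - c j * d i))
      - a l * (b i * (c j * d k - c k * d j) - b j * (c i * d k - c k * d i)
              + b k * (c i * d j - c j * d i)) := by
  simp [quad7, Matrix.det_succ_row_zero, Fin.sum_univ_succ, Fin.succAbove]
  ring

-- degenerate starphi0
lemma starphi0_abab (a b : E7) : starphi0 a b a b = 0 := by
  simp [starphi0, quad7_expand]; ring
lemma starphi0_abac (a b c : E7) : starphi0 a b a c = 0 := by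
  simp [starphi0, quad7_expand]; ring
lemma starphi0_abca (a b c : E7) : starphi0 a b c a = 0 := by
  simp [starphi0, quad7_expand]; ring
lemma starphi0_abcb (a b c : E7) : starphi0 a b c b = 0 := by
  simp [starphi0, quad7_expand]; ring
lemma starphi0_abbc (a b c : E7) : starphi0 a b b c = 0 := by
  simp [starphi0, quad7_expand]; ring

-- phi0 symmetries and degeneracies
lemma phi0_swap12 (a b c : E7) : phi0 a b c = -phi0 b a c := by
  simp [phi0, tri7_expand]; ring
lemma phi0_swap23 (a b c : E7) : phi0 a b c = -phi0 a c b := by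
  simp [phi0, tri7_expand]; ring
lemma phi0_cyc (a b c : E7) : phi0 a b c = phi0 c a b := by
  simp [phi0, tri7_expand]; ring
lemma phi0_aab (a b : E7) : phi0 a a b = 0 := by
  simp [phi0, tri7_expand]; ring
lemma phi0_abb (a b : E7) : phi0 a b b = 0 := by
  simp [phi0, tri7_expand]; ring
lemma phi0_aba (a b : E7) : phi0 a b a = 0 := by
  simp [phi0, tri7_expand]; ring

-- linearity
lemma phi0_add1 (a a' v w : E7) : phi0 (a + a') v w = phi0 a v w + phi0 a' v w := by
  simp [phi0, tri7_expand, PiLp.add_apply]; ring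
lemma phi0_add2 (v a a' w : E7) : phi0 v (a + a') w = phi0 v a w + phi0 v a' w := by
  simp [phi0, tri7_expand, PiLp.add_apply]; ring
lemma phi0_add3 (v w a a' : E7) : phi0 v w (a + a') = phi0 v w a + phi0 v w a' := by
  simp [phi0, tri7_expand, PiLp.add_apply]; ring
lemma phi0_smul1 (r : ℝ) (a v w : E7) : phi0 (r • a) v w = r * phi0 a v w := by
  simp [phi0, tri7_expand, PiLp.smul_apply, smul_eq_mul]; ring
lemma phi0_smul2 (r : ℝ) (v a w : E7) : phi0 v (r • a) w = r * phi0 v a w := by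
  simp [phi0, tri7_expand, PiLp.smul_apply, smul_eq_mul]; ring
lemma phi0_smul3 (r : ℝ) (v w a : E7) : phi0 v w (r • a) = r * phi0 v w a := by
  simp [phi0, tri7_expand, PiLp.smul_apply, smul_eq_mul]; ring

lemma phi0_perm {a b c : E7} (h : phi0 a b c = 0) :
    phi0 a c b = 0 ∧ phi0 b a c = 0 ∧ phi0 b c a = 0 ∧ phi0 c a b = 0 ∧ phi0 c b a = 0 := by
  refine ⟨?_, ?_, ?_, ?_, ?_⟩
  · rw [phi0_swap23 a c b, h, neg_zero]
  · rw [phi0_swap12 b a c, h, neg_zero]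
  · rw [phi0_cyc b c a, h]
  · rw [phi0_cyc c a b, phi0_cyc b c a, h]
  · rw [phi0_swap23 c b a, phi0_cyc c a b, phi0_cyc b c a, h, neg_zero]

lemma phi0_lc4 {e₁ e₂ e₃ e₄ : E7}
    (h1 : phi0 e₁ e₂ e₃ = 0) (h2 : phi0 e₁ e₂ e₄ = 0)
    (h3 : phi0 e₁ e₃ e₄ = 0) (h4 : phi0 e₂ e₃ e₄ = 0)
    (a₁ a₂ a₃ a₄ b₁ b₂ b₃ b₄ c₁ c₂ c₃ c₄ : ℝ) :
    phi0 (a₁•e₁+a₂•e₂+a₃•e₃+a₄•e₄) (b₁•e₁+b₂•e₂+b₃•e₃+b₄•e₄) (c₁•e₁+c₂•e₂+c₃•e₃+c₄•e₄) = 0 := by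
  obtain ⟨p1a, p1b, p1c, p1d, p1e⟩ := phi0_perm h1
  obtain ⟨p2a, p2b, p2c, p2d, p2e⟩ := phi0_perm h2
  obtain ⟨p3a, p3b, p3c, p3d, p3e⟩ := phi0_perm h3
  obtain ⟨p4a, p4b, p4c, p4d, p4e⟩ := phi0_perm h4
  simp only [phi0_add1, phi0_add2, phi0_add3, phi0_smul1, phi0_smul2, phi0_smul3,
    phi0_aab, phi0_abb, phi0_aba,
    h1, h2, h3, h4, p1a, p1b, p1c, p1d, p1e, p2a, p2b, p2c, p2d, p2e,
    p3a, p3b, p3c, p3d, p3e, p4a, p4b, p4c, p4d, p4e,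
    mul_zero, add_zero, zero_add]

def cross (u v : E7) : E7 :=
    EuclideanSpace.single 0 (  (u 1 * v 2 - u 2 * v 1) + (u 3 * v 4 - u 4 * v 3) + (u 5 * v 6 - u 6 * v 5))
  + EuclideanSpace.single 1 (- (u 0 * v 2 - u 2 * v 0) + (u 3 * v 5 - u 5 * v 3) - (u 4 * v 6 - u 6 * v 4))
  + EuclideanSpace.single 2 (  (u 0 * v 1 - u 1 * v 0) - (u 3 * v 6 - u 6 * v 3) - (u 4 * v 5 - u 5 * v 4))
  + EuclideanSpace.single 3 (- (u 0 * v 4 - u 4 * v 0) - (u 1 * v 5 - u 5 * v 1) + (u 2 * v 6 - u 6 * v 2))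
  + EuclideanSpace.single 4 (  (u 0 * v 3 - u 3 * v 0) + (u 1 * v 6 - u 6 * v 1) + (u 2 * v 5 - u 5 * v 2))
  + EuclideanSpace.single 5 (- (u 0 * v 6 - u 6 * v 0) + (u 1 * v 3 - u 3 * v 1) - (u 2 * v 4 - u 4 * v 2))
  + EuclideanSpace.single 6 (  (u 0 * v 5 - u 5 * v 0) - (u 1 * v 4 - u 4 * v 1) - (u 2 * v 3 - u 3 * v 2))

lemma inner_cross (u v w : E7) : ⟪cross u v, w⟫ = phi0 u v w := by
  simp [cross, phi0, tri7_expand, inner_add_left, EuclideanSpace.inner_single_left]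
  ring

lemma cr_apply0 (u v : E7) : cross u v 0 = (u 1 * v 2 - u 2 * v 1) + (u 3 * v 4 - u 4 * v 3) + (u 5 * v 6 - u 6 * v 5) := by
  simp [cross, PiLp.add_apply, EuclideanSpace.single_apply]
lemma cr_apply1 (u v : E7) : cross u v 1 = - (u 0 * v 2 - u 2 * v 0) + (u 3 * v 5 - u 5 * v 3) - (u 4 * v 6 - u 6 * v 4) := by
  simp [cross, PiLp.add_apply, EuclideanSpace.single_apply]
lemma cr_apply2 (u v : E7) : cross u v 2 = (u 0 * v 1 - u 1 * v 0) - (u 3 * v 6 - u 6 * v 3) - (u 4 * v 5 - u 5 * v 4) := by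
  simp [cross, PiLp.add_apply, EuclideanSpace.single_apply]
lemma cr_apply3 (u v : E7) : cross u v 3 = - (u 0 * v 4 - u 4 * v 0) - (u 1 * v 5 - u 5 * v 1) + (u 2 * v 6 - u 6 * v 2) := by
  simp [cross, PiLp.add_apply, EuclideanSpace.single_apply]
lemma cr_apply4 (u v : E7) : cross u v 4 = (u 0 * v 3 - u 3 * v 0) + (u 1 * v 6 - u 6 * v 1) + (u 2 * v 5 - u 5 * v 2) := by
  simp [cross, PiLp.add_apply, EuclideanSpace.single_apply]
lemma cr_apply5 (u v : E7) : cross u v 5 = - (u 0 * v 6 - u 6 * v 0) + (u 1 * v 3 - u 3 * v 1) - (u 2 * v 4 - u 4 * v 2) := by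
  simp [cross, PiLp.add_apply, EuclideanSpace.single_apply]
lemma cr_apply6 (u v : E7) : cross u v 6 = (u 0 * v 5 - u 5 * v 0) - (u 1 * v 4 - u 4 * v 1) - (u 2 * v 3 - u 3 * v 2) := by
  simp [cross, PiLp.add_apply, EuclideanSpace.single_apply]

set_option maxHeartbeats 1000000 in
lemma cross_inner_cross (a b c d : E7) :
    ⟪cross a b, cross c d⟫ = ⟪a,c⟫*⟪b,d⟫ - ⟪a,d⟫*⟪b,c⟫ + starphi0 a b c d := by
  simp only [PiLp.inner_apply, RCLike.inner_apply, conj_trivial,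
    Fin.sum_univ_seven, starphi0, quad7_expand,
    cr_apply0, cr_apply1, cr_apply2, cr_apply3, cr_apply4, cr_apply5, cr_apply6]
  ring


lemma phi_vanish {a b c d : E7} (hon : Orthonormal ℝ ![a, b, c, d])
    (habs : |starphi0 a b c d| = 1) : phi0 a b c = 0 ∧ phi0 a b d = 0 := by
  have ho := orthonormal_iff_ite.mp hon
  have haa : ⟪a,a⟫ = 1 := by simpa using ho 0 0
  have hab : ⟪a,b⟫ = 0 := by simpa using ho 0 1
  have hac : ⟪a,c⟫ = 0 := by simpa using ho 0 2
  have had : ⟪a,d⟫ = 0 := by simpa using ho 0 3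
  have hba : ⟪b,a⟫ = 0 := by simpa using ho 1 0
  have hbb : ⟪b,b⟫ = 1 := by simpa using ho 1 1
  have hbc : ⟪b,c⟫ = 0 := by simpa using ho 1 2
  have hbd : ⟪b,d⟫ = 0 := by simpa using ho 1 3
  have hca : ⟪c,a⟫ = 0 := by simpa using ho 2 0
  have hcb : ⟪c,b⟫ = 0 := by simpa using ho 2 1
  have hcc : ⟪c,c⟫ = 1 := by simpa using ho 2 2
  have hcd : ⟪c,d⟫ = 0 := by simpa using ho 2 3
  have hda : ⟪d,a⟫ = 0 := by simpa using ho 3 0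
  have hdb : ⟪d,b⟫ = 0 := by simpa using ho 3 1
  have hdc : ⟪d,c⟫ = 0 := by simpa using ho 3 2
  have hdd : ⟪d,d⟫ = 1 := by simpa using ho 3 3
  have hxx : ⟪cross a b, cross a b⟫ = 1 := by
    rw [cross_inner_cross, starphi0_abac, haa, hbb, hab, hba]; norm_num
  have hyy : ⟪cross c d, cross c d⟫ = 1 := by
    rw [cross_inner_cross, starphi0_abac, hcc, hdd, hcd, hdc]; norm_num
  have hxy : ⟪cross a b, cross c d⟫ = starphi0 a b c d := by
    rw [cross_inner_cross, hac, hbd, had, hbc]; ring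
  have ht : starphi0 a b c d * starphi0 a b c d = 1 := by
    have h2 := abs_mul_abs_self (starphi0 a b c d)
    rw [habs, one_mul] at h2; exact h2.symm
  have hyx : ⟪cross c d, cross a b⟫ = starphi0 a b c d := by
    rw [real_inner_comm]; exact hxy
  have hz : cross a b - starphi0 a b c d • cross c d = 0 := by
    rw [← inner_self_eq_zero (𝕜 := ℝ)]
    simp only [inner_sub_left, inner_sub_right, real_inner_smul_left, real_inner_smul_right,
      hxx, hyy, hxy, hyx]
    nlinarith [ht]
  have hx : cross a b = starphi0 a b c d • cross c d := by rwa [sub_eq_zero] at hz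
  constructor
  · have hic := inner_cross a b c
    rw [hx, real_inner_smul_left, inner_cross, phi0_aba, mul_zero] at hic
    exact hic.symm
  · have hid := inner_cross a b d
    rw [hx, real_inner_smul_left, inner_cross, phi0_abb, mul_zero] at hid
    exact hid.symm

set_option maxHeartbeats 1000000 in
/-- A 4-dimensional subspace W ⊆ ℝ⁷ satisfies φ₀|_W ≡ 0 if and only if W is coassociative
with some orientation, i.e. |*φ₀(e₁,e₂,e₃,e₄)| = 1 for every orthonormal quadruple
(e₁,e₂,e₃,e₄) of vectors of W (such a quadruple being automatically a basis of W). -/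
theorem coassociative_iff_phi0_vanishes
    (W : Submodule ℝ E7) (hW : Module.finrank ℝ W = 4) :
    (∀ u v w : E7, u ∈ W → v ∈ W → w ∈ W → phi0 u v w = 0) ↔
    (∀ e₁ e₂ e₃ e₄ : E7, e₁ ∈ W → e₂ ∈ W → e₃ ∈ W → e₄ ∈ W →
      Orthonormal ℝ ![e₁, e₂, e₃, e₄] → |starphi0 e₁ e₂ e₃ e₄| = 1) := by
  constructor
  · intro h e1 e2 e3 e4 m1 m2 m3 m4 hon
    have hon' := orthonormal_iff_ite.mp hon
    have hcW : ∀ x y z : E7, x ∈ W → y ∈ W → z ∈ W → ⟪z, cross x y⟫ = 0 := by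
      intro x y z hx hy hz
      rw [real_inner_comm, inner_cross]; exact h x y z hx hy hz
    have h11 : ⟪e1,e1⟫ = 1 := by simpa using hon' 0 0
    have h12 : ⟪e1,e2⟫ = 0 := by simpa using hon' 0 1
    have h13 : ⟪e1,e3⟫ = 0 := by simpa using hon' 0 2
    have h14 : ⟪e1,e4⟫ = 0 := by simpa using hon' 0 3
    have h21 : ⟪e2,e1⟫ = 0 := by simpa using hon' 1 0
    have h22 : ⟪e2,e2⟫ = 1 := by simpa using hon' 1 1
    have h23 : ⟪e2,e3⟫ = 0 := by simpa using hon' 1 2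
    have h24 : ⟪e2,e4⟫ = 0 := by simpa using hon' 1 3
    have h31 : ⟪e3,e1⟫ = 0 := by simpa using hon' 2 0
    have h32 : ⟪e3,e2⟫ = 0 := by simpa using hon' 2 1
    have h33 : ⟪e3,e3⟫ = 1 := by simpa using hon' 2 2
    have h34 : ⟪e3,e4⟫ = 0 := by simpa using hon' 2 3
    have h41 : ⟪e4,e1⟫ = 0 := by simpa using hon' 3 0
    have h42 : ⟪e4,e2⟫ = 0 := by simpa using hon' 3 1
    have h43 : ⟪e4,e3⟫ = 0 := by simpa using hon' 3 2
    have h44 : ⟪e4,e4⟫ = 1 := by simpa using hon' 3 3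
    have hf22 : ⟪cross e1 e2, cross e1 e2⟫ = 1 := by
      rw [cross_inner_cross, starphi0_abac, h11, h22, h12, h21]; norm_num
    have hf23 : ⟪cross e1 e2, cross e1 e3⟫ = 0 := by
      rw [cross_inner_cross, starphi0_abac, h11, h23, h13, h21]; norm_num
    have hf24 : ⟪cross e1 e2, cross e1 e4⟫ = 0 := by
      rw [cross_inner_cross, starphi0_abac, h11, h24, h14, h21]; norm_num
    have hf32 : ⟪cross e1 e3, cross e1 e2⟫ = 0 := by
      rw [cross_inner_cross, starphi0_abac, h11, h32, h12, h31]; norm_num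
    have hf33 : ⟪cross e1 e3, cross e1 e3⟫ = 1 := by
      rw [cross_inner_cross, starphi0_abac, h11, h33, h13, h31]; norm_num
    have hf34 : ⟪cross e1 e3, cross e1 e4⟫ = 0 := by
      rw [cross_inner_cross, starphi0_abac, h11, h34, h14, h31]; norm_num
    have hf42 : ⟪cross e1 e4, cross e1 e2⟫ = 0 := by
      rw [cross_inner_cross, starphi0_abac, h11, h42, h12, h41]; norm_num
    have hf43 : ⟪cross e1 e4, cross e1 e3⟫ = 0 := by
      rw [cross_inner_cross, starphi0_abac, h11, h43, h13, h41]; norm_num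
    have hf44 : ⟪cross e1 e4, cross e1 e4⟫ = 1 := by
      rw [cross_inner_cross, starphi0_abac, h11, h44, h14, h41]; norm_num
    have hef12 : ⟪e1, cross e1 e2⟫ = 0 := hcW e1 e2 e1 m1 m2 m1
    have hfe21 : ⟪cross e1 e2, e1⟫ = 0 := by rw [inner_cross]; exact h e1 e2 e1 m1 m2 m1
    have hef13 : ⟪e1, cross e1 e3⟫ = 0 := hcW e1 e3 e1 m1 m3 m1
    have hfe31 : ⟪cross e1 e3, e1⟫ = 0 := by rw [inner_cross]; exact h e1 e3 e1 m1 m3 m1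
    have hef14 : ⟪e1, cross e1 e4⟫ = 0 := hcW e1 e4 e1 m1 m4 m1
    have hfe41 : ⟪cross e1 e4, e1⟫ = 0 := by rw [inner_cross]; exact h e1 e4 e1 m1 m4 m1
    have hef22 : ⟪e2, cross e1 e2⟫ = 0 := hcW e1 e2 e2 m1 m2 m2
    have hfe22 : ⟪cross e1 e2, e2⟫ = 0 := by rw [inner_cross]; exact h e1 e2 e2 m1 m2 m2
    have hef23 : ⟪e2, cross e1 e3⟫ = 0 := hcW e1 e3 e2 m1 m3 m2
    have hfe32 : ⟪cross e1 e3, e2⟫ = 0 := by rw [inner_cross]; exact h e1 e3 e2 m1 m3 m2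
    have hef24 : ⟪e2, cross e1 e4⟫ = 0 := hcW e1 e4 e2 m1 m4 m2
    have hfe42 : ⟪cross e1 e4, e2⟫ = 0 := by rw [inner_cross]; exact h e1 e4 e2 m1 m4 m2
    have hef32 : ⟪e3, cross e1 e2⟫ = 0 := hcW e1 e2 e3 m1 m2 m3
    have hfe23 : ⟪cross e1 e2, e3⟫ = 0 := by rw [inner_cross]; exact h e1 e2 e3 m1 m2 m3
    have hef33 : ⟪e3, cross e1 e3⟫ = 0 := hcW e1 e3 e3 m1 m3 m3
    have hfe33 : ⟪cross e1 e3, e3⟫ = 0 := by rw [inner_cross]; exact h e1 e3 e3 m1 m3 m3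
    have hef34 : ⟪e3, cross e1 e4⟫ = 0 := hcW e1 e4 e3 m1 m4 m3
    have hfe43 : ⟪cross e1 e4, e3⟫ = 0 := by rw [inner_cross]; exact h e1 e4 e3 m1 m4 m3
    have hef42 : ⟪e4, cross e1 e2⟫ = 0 := hcW e1 e2 e4 m1 m2 m4
    have hfe24 : ⟪cross e1 e2, e4⟫ = 0 := by rw [inner_cross]; exact h e1 e2 e4 m1 m2 m4
    have hef43 : ⟪e4, cross e1 e3⟫ = 0 := hcW e1 e3 e4 m1 m3 m4
    have hfe34 : ⟪cross e1 e3, e4⟫ = 0 := by rw [inner_cross]; exact h e1 e3 e4 m1 m3 m4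
    have hef44 : ⟪e4, cross e1 e4⟫ = 0 := hcW e1 e4 e4 m1 m4 m4
    have hfe44 : ⟪cross e1 e4, e4⟫ = 0 := by rw [inner_cross]; exact h e1 e4 e4 m1 m4 m4
    have hf2m : cross e1 e2 ∈ Wᗮ := (Submodule.mem_orthogonal W _).mpr
      (fun u hu => hcW e1 e2 u m1 m2 hu)
    have hf3m : cross e1 e3 ∈ Wᗮ := (Submodule.mem_orthogonal W _).mpr
      (fun u hu => hcW e1 e3 u m1 m3 hu)
    have hf4m : cross e1 e4 ∈ Wᗮ := (Submodule.mem_orthogonal W _).mpr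
      (fun u hu => hcW e1 e4 u m1 m4 hu)
    have hnm : cross e3 e4 ∈ Wᗮ := (Submodule.mem_orthogonal W _).mpr
      (fun u hu => hcW e3 e4 u m3 m4 hu)
    have hWp : Module.finrank ℝ ↥Wᗮ = 3 := by
      have h7 := Submodule.finrank_add_finrank_orthogonal (K := W)
      rw [hW] at h7
      have h77 : Module.finrank ℝ E7 = 7 := by simp
      omega
    set g : Fin 3 → ↥Wᗮ := ![⟨cross e1 e2, hf2m⟩, ⟨cross e1 e3, hf3m⟩, ⟨cross e1 e4, hf4m⟩] with hg
    have hgon : Orthonormal ℝ g := by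
      apply orthonormal_iff_ite.mpr
      intro i j
      fin_cases i <;> fin_cases j <;> rw [Submodule.coe_inner] <;> simp only [hg] <;>
        (first | exact hf22 | exact hf23 | exact hf24 | exact hf32 | exact hf33 | exact hf34 | exact hf42 | exact hf43 | exact hf44)
    have hsp : Submodule.span ℝ (Set.range g) = ⊤ :=
      hgon.linearIndependent.span_eq_top_of_card_eq_finrank (by simp [hWp])
    have hnf3 : ⟪cross e1 e3, cross e3 e4⟫ = 0 := by
      rw [cross_inner_cross, starphi0_abbc, h13, h34, h14, h33]; ring
    have hnf4 : ⟪cross e1 e4, cross e3 e4⟫ = 0 := by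
      rw [cross_inner_cross, starphi0_abcb, h13, h44, h14, h43]; ring
    have hnf2 : ⟪cross e1 e2, cross e3 e4⟫ = starphi0 e1 e2 e3 e4 := by
      rw [cross_inner_cross, h13, h24, h14, h23]; ring
    set t := starphi0 e1 e2 e3 e4 with htdef
    have hmm : cross e3 e4 - t • cross e1 e2 ∈ Wᗮ :=
      Submodule.sub_mem _ hnm (Submodule.smul_mem _ _ hf2m)
    set mW : ↥Wᗮ := ⟨cross e3 e4 - t • cross e1 e2, hmm⟩ with hmW
    have k2 : (inner ℝ (cross e1 e2) (cross e3 e4 - t • cross e1 e2) : ℝ) = 0 := by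
      rw [inner_sub_right, real_inner_smul_right, hnf2, hf22]; ring
    have k3 : (inner ℝ (cross e1 e3) (cross e3 e4 - t • cross e1 e2) : ℝ) = 0 := by
      rw [inner_sub_right, real_inner_smul_right, hnf3, hf32]; ring
    have k4 : (inner ℝ (cross e1 e4) (cross e3 e4 - t • cross e1 e2) : ℝ) = 0 := by
      rw [inner_sub_right, real_inner_smul_right, hnf4, hf42]; ring
    have hgi : ∀ i, ⟪g i, mW⟫ = 0 := by
      intro i
      rw [hmW, Submodule.coe_inner]
      fin_cases i
      · exact k2
      · exact k3
      · exact k4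
    have hall : ∀ x, x ∈ Submodule.span ℝ (Set.range g) → (⟪x, mW⟫ : ℝ) = 0 := by
      intro x hx
      induction hx using Submodule.span_induction with
      | mem y hy => obtain ⟨i, rfl⟩ := hy; exact hgi i
      | zero => simp
      | add y z _ _ hy hz => rw [inner_add_left, hy, hz, add_zero]
      | smul r y _ hy => rw [real_inner_smul_left, hy, mul_zero]
    have hmzero : mW = 0 := by
      rw [← inner_self_eq_zero (𝕜 := ℝ)]
      exact hall mW (by rw [hsp]; exact Submodule.mem_top)
    have hmz : cross e3 e4 - t • cross e1 e2 = 0 := by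
      have := congrArg (Subtype.val) hmzero
      exact this
    have hrep : cross e3 e4 = t • cross e1 e2 := by rwa [sub_eq_zero] at hmz
    have hnn : ⟪cross e3 e4, cross e3 e4⟫ = 1 := by
      rw [cross_inner_cross, starphi0_abac, h33, h44, h34, h43]; norm_num
    rw [hrep, real_inner_smul_left, real_inner_smul_right, hf22] at hnn
    rcases mul_self_eq_one_iff.mp (by linarith [hnn] : t * t = 1) with ht | ht <;>
      rw [ht] <;> norm_num
  · intro h u v w hu hv hw
    let b : OrthonormalBasis (Fin 4) ℝ W := (stdOrthonormalBasis ℝ W).reindex (finCongr hW)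
    set e : Fin 4 → E7 := fun i => (b i : E7) with he
    have hmem : ∀ i, e i ∈ W := fun i => (b i).2
    have hone : ∀ i j : Fin 4, ⟪e i, e j⟫ = if i = j then 1 else 0 := by
      intro i j
      have h2 := orthonormal_iff_ite.mp b.orthonormal i j
      rwa [Submodule.coe_inner] at h2
    have hq1 : Orthonormal ℝ ![e 0, e 1, e 2, e 3] := by
      apply orthonormal_iff_ite.mpr
      intro x y; fin_cases x <;> fin_cases y <;> simp [hone, -inner_self_eq_norm_sq_to_K]
    have hq2 : Orthonormal ℝ ![e 0, e 2, e 1, e 3] := by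
      apply orthonormal_iff_ite.mpr
      intro x y; fin_cases x <;> fin_cases y <;> simp [hone, -inner_self_eq_norm_sq_to_K]
    have hq3 : Orthonormal ℝ ![e 1, e 2, e 3, e 0] := by
      apply orthonormal_iff_ite.mpr
      intro x y; fin_cases x <;> fin_cases y <;> simp [hone, -inner_self_eq_norm_sq_to_K]
    obtain ⟨hA1, hA2⟩ := phi_vanish hq1 (h (e 0) (e 1) (e 2) (e 3) (hmem 0) (hmem 1) (hmem 2) (hmem 3) hq1)
    obtain ⟨hB1, hB2⟩ := phi_vanish hq2 (h (e 0) (e 2) (e 1) (e 3) (hmem 0) (hmem 2) (hmem 1) (hmem 3) hq2)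
    obtain ⟨hC1, hC2⟩ := phi_vanish hq3 (h (e 1) (e 2) (e 3) (e 0) (hmem 1) (hmem 2) (hmem 3) (hmem 0) hq3)
    have hexp : ∀ (x : E7), x ∈ W → (⟪e 0, x⟫ • e 0 + ⟪e 1, x⟫ • e 1 + ⟪e 2, x⟫ • e 2 + ⟪e 3, x⟫ • e 3) = x := by
      intro x hx
      have h3 := congrArg (Subtype.val) (b.sum_repr' ⟨x, hx⟩)
      rw [Fin.sum_univ_four] at h3
      simpa [Submodule.coe_inner, he] using h3
    rw [← hexp u hu, ← hexp v hv, ← hexp w hw]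
    exact phi0_lc4 hA1 hA2 hB2 hC1 _ _ _ _ _ _ _ _ _ _ _ _
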